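/- arXiv:math/0505118 — 3 statements merged into one kernel-verified Lean document; each statement's English description precedes it below -/
import Mathlib

section
/- Let E be a finite-dimensional real inner product space, V a subspace of E, P : E → E the orthogonal projection onto V, and a ∈ V. Let M be a smooth manifold and ι : M → E a smooth map, and set f : M → ℝ, f(x) = ‖P(ι x) − a‖². Then for x ∈ M, the differential of f at x vanishes if and only if the vector P(ι x) − a is orthogonal to the image of the differential of ι at x (i.e., P(ι x) − a lies in the orthogonal complement of the range of dι_x). -/
open scoped Manifold

/-- Let `E` be a finite-dimensional real inner product space, `V` a subspace,
`P : E → E` the orthogonal projection onto `V`, `a ∈ V`.  Let `M` be a smooth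
manifold and `ι : M → E` a smooth map, and `f x = ‖P (ι x) - a‖ ^ 2`.  Then the
differential of `f` at `x` vanishes iff `P (ι x) - a` is orthogonal to the image
of the differential of `ι` at `x`. -/
theorem stmt2 {E : Type*} [NormedAddCommGroup E] [InnerProductSpace ℝ E]
    [FiniteDimensional ℝ E]
    (V : Submodule ℝ E)
    (P : E → E) (hP : ∀ y, P y = (Submodule.orthogonalProjectionOnto V y : E))
    (a : E) (ha : a ∈ V)
    {F : Type*} [NormedAddCommGroup F] [NormedSpace ℝ F]
    {H : Type*} [TopologicalSpace H] (I : ModelWithCorners ℝ F H)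
    {M : Type*} [TopologicalSpace M] [ChartedSpace H M] [IsManifold I ((⊤ : ℕ∞) : WithTop ℕ∞) M]
    (ι : M → E) (hι : ContMDiff I 𝓘(ℝ, E) (⊤ : ℕ∞) ι)
    (f : M → ℝ) (hf : ∀ y, f y = ‖P (ι y) - a‖ ^ 2)
    (x : M) :
    mfderiv I 𝓘(ℝ, ℝ) f x = 0 ↔
      P (ι x) - a ∈ Submodule.orthogonal (𝕜 := ℝ) (E := E)
        (LinearMap.range (ContinuousLinearMap.toLinearMap (show TangentSpace I x →L[ℝ] E from mfderiv I 𝓘(ℝ, E) ι x))) := by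
  classical
  set Pc : E →L[ℝ] E := V.subtypeL.comp V.orthogonalProjectionOnto with hPc
  have hPfun : ∀ y, P y = Pc y := fun y => hP y
  set b : E := P (ι x) - a with hb
  have hbV : b ∈ V := by
    rw [hb, hPfun]
    exact V.sub_mem (Submodule.coe_mem _) ha
  -- key: ⟪b, Pc v⟫ = ⟪b, v⟫
  have hkey : ∀ v : E, (inner ℝ b (Pc v) : ℝ) = inner ℝ b v := by
    intro v
    have h1 : (inner ℝ b (Pc v) : ℝ) =
        inner ℝ (⟨b, hbV⟩ : V) (V.orthogonalProjectionOnto v) := by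
      rw [Submodule.coe_inner]
      rfl
    rw [h1, Submodule.inner_orthogonalProjectionOnto_eq_of_mem_left]
  set D := mfderiv I 𝓘(ℝ, E) ι x with hD
  have hιd : MDifferentiableAt I 𝓘(ℝ, E) ι x := (hι x).mdifferentiableAt (by simp)
  set g : E → ℝ := fun y => ‖Pc y - a‖ ^ 2 with hgdef
  have hfg : f = g ∘ ι := by
    funext y
    simp [hf y, hgdef, hPfun]
  have hgd : HasFDerivAt g (2 • (innerSL ℝ (Pc (ι x) - a)).comp Pc) (ι x) := by
    have h1 : HasFDerivAt (fun y => Pc y - a) Pc (ι x) := Pc.hasFDerivAt.sub_const a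
    simpa [hgdef] using h1.norm_sq
  have hcomp : mfderiv I 𝓘(ℝ, ℝ) f x =
      ((2 • (innerSL ℝ (Pc (ι x) - a)).comp Pc).comp D) := by
    rw [hfg, mfderiv_comp x hgd.hasMFDerivAt.mdifferentiableAt hιd]
    congr 1
    exact hgd.hasMFDerivAt.mfderiv
  have hbeq : Pc (ι x) - a = b := by rw [hb, hPfun]
  rw [hcomp, hbeq]
  have hDw : ∀ w : TangentSpace I x,
      ((2 • (innerSL ℝ b).comp Pc).comp D) w = 2 * inner ℝ b (show E from D w) := by
    intro w
    have : ((2 • (innerSL ℝ b).comp Pc).comp D) w = 2 • (inner ℝ b (Pc (show E from D w)) : ℝ) :=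
      rfl
    rw [this, hkey]
    simp
  constructor
  · intro h
    rw [Submodule.mem_orthogonal]
    rintro u ⟨w, rfl⟩
    have h2 : ((2 • (innerSL ℝ b).comp Pc).comp D) w = (0 : ℝ) := by rw [h]; rfl
    rw [hDw w] at h2
    have h3 : (inner ℝ b (show E from D w) : ℝ) = 0 := by linarith
    rw [real_inner_comm]
    exact h3
  · intro h
    ext w
    show ((2 • (innerSL ℝ b).comp Pc).comp D) w = (0 : ℝ)
    have h2 : (inner ℝ (show E from D w) b : ℝ) = 0 := h (D w) ⟨w, rfl⟩
    rw [real_inner_comm] at h2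
    rw [hDw w, h2, mul_zero]
end

section
/- Let n ≥ 1, let r, s ∈ Fin n with r ≠ s, and let X be an n × n matrix over the quaternions ℍ. Suppose that for every tuple h : Fin n → ℍ with ‖h_i‖ = 1 for all i and with h_r = 1 and h_s = 1, one has D(h) * X * D(conj ∘ h) = X, where D(h) is the diagonal matrix with entries h. Then X_{ij} = 0 for all i ≠ j with (i, j) ≠ (r, s) and (i, j) ≠ (s, r). -/
open Quaternion Matrix

/-- Let `n ≥ 1`, `r ≠ s` in `Fin n`, and `X` an `n × n` matrix over `ℍ`.
Suppose that for every tuple `h : Fin n → ℍ` of unit quaternions with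
`h r = 1` and `h s = 1` one has `D h * X * D (conj ∘ h) = X`.  Then
`X i j = 0` for all `i ≠ j` with `(i, j) ≠ (r, s)` and `(i, j) ≠ (s, r)`. -/
theorem stmt9 {n : ℕ} (hn : 1 ≤ n) (r s : Fin n) (hrs : r ≠ s)
    (X : Matrix (Fin n) (Fin n) ℍ[ℝ])
    (hX : ∀ h : Fin n → ℍ[ℝ], (∀ i, ‖h i‖ = 1) → h r = 1 → h s = 1 →
      Matrix.diagonal h * X * Matrix.diagonal (star ∘ h) = X)
    (i j : Fin n) (hij : i ≠ j) (hij₁ : (i, j) ≠ (r, s)) (hij₂ : (i, j) ≠ (s, r)) :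
    X i j = 0 := by
  set q : ℍ[ℝ] := ⟨0,1,0,0⟩ with hqdef
  have hqn : ‖q‖ = 1 := by
    have h : ‖q‖ * ‖q‖ = 1 := by
      rw [← Quaternion.normSq_eq_norm_mul_self]
      rw [Quaternion.normSq_def']
      simp [hqdef]
    rcases mul_self_eq_one_iff.mp h with h1 | h1
    · exact h1
    · nlinarith [norm_nonneg q]
  have hq1 : q ≠ 1 := by
    intro h
    have := congrArg QuaternionAlgebra.imI h
    simp [hqdef] at this
  have key : ∀ t : Fin n, t ≠ r → t ≠ s →
      (if i = t then q else 1) * X i j * star (if j = t then q else 1) = X i j := by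
    intro t htr hts
    have h1 : ∀ k, ‖(if k = t then q else 1 : ℍ[ℝ])‖ = 1 := by
      intro k; split <;> simp [hqn]
    have h0 := hX (fun k => if k = t then q else 1) h1 (by simp [htr.symm]) (by simp [hts.symm])
    have h2 := congrFun (congrFun h0 i) j
    simpa only [Matrix.mul_diagonal, Matrix.diagonal_mul, Function.comp] using h2
  by_cases hi : i ≠ r ∧ i ≠ s
  · have h2 := key i hi.1 hi.2
    simp only [if_pos rfl, if_neg (Ne.symm hij), star_one, mul_one, eq_self_iff_true, if_true] at h2
    have hz : (q - 1) * X i j = 0 := by rw [sub_mul, one_mul, h2, sub_self]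
    rcases mul_eq_zero.mp hz with h | h
    · exact absurd (sub_eq_zero.mp h) hq1
    · exact h
  · push_neg at hi
    have hj : j ≠ r ∧ j ≠ s := by
      by_cases hir : i = r
      · exact ⟨fun hjr => hij (hir.trans hjr.symm), fun hjs => hij₁ (by rw [hir, hjs])⟩
      · have his : i = s := hi hir
        exact ⟨fun hjr => hij₂ (by rw [his, hjr]), fun hjs => hij (his.trans hjs.symm)⟩
    have h2 := key j hj.1 hj.2
    simp only [if_pos rfl, if_neg hij, one_mul, eq_self_iff_true, if_true] at h2
    have hz : X i j * (star q - 1) = 0 := by rw [mul_sub, mul_one, h2, sub_self]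
    rcases mul_eq_zero.mp hz with h | h
    · exact h
    · exact absurd (by simpa using congrArg star (sub_eq_zero.mp h)) hq1
end

section
/- Let A ∈ U(2) (a 2 × 2 complex unitary matrix) and let M(A) ∈ M₃(ℂ) be the block-diagonal matrix diag((det A)⁻¹, A), i.e., M(A)₀₀ = (det A)⁻¹, M(A)_{(i+1)(j+1)} = A_{ij} for i, j ∈ {0,1}, and all other entries 0. Let X₀ ∈ M₃(ℂ) be the matrix with (X₀)₀₁ = −1, (X₀)₁₀ = 1, and all other entries 0. Then M(A) * X₀ = X₀ * M(A) if and only if there exists z ∈ ℂ with |z| = 1 such that M(A) = diag(z, z, z⁻²). -/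
open Matrix

/-- Let `A ∈ U(2)` and let `M(A) = diag((det A)⁻¹, A) ∈ M₃(ℂ)` be the standard
embedding of `U(2)` into `SU(3)`.  Let `X₀` be the matrix with `(X₀)₀₁ = -1`,
`(X₀)₁₀ = 1` and all other entries `0`.  Then `M(A)` commutes with `X₀` iff
there exists `z ∈ ℂ` with `|z| = 1` such that `M(A) = diag(z, z, z⁻²)`. -/
theorem stmt11 (A : Matrix (Fin 2) (Fin 2) ℂ) (hA : A ∈ Matrix.unitaryGroup (Fin 2) ℂ)
    (MA : Matrix (Fin 3) (Fin 3) ℂ)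
    (hMA00 : MA 0 0 = (A.det)⁻¹)
    (hMAblock : ∀ i j : Fin 2, MA i.succ j.succ = A i j)
    (hMArow : ∀ j : Fin 2, MA 0 j.succ = 0)
    (hMAcol : ∀ i : Fin 2, MA i.succ 0 = 0)
    (X₀ : Matrix (Fin 3) (Fin 3) ℂ)
    (hX₀ : X₀ = !![0, -1, 0; 1, 0, 0; 0, 0, 0]) :
    MA * X₀ = X₀ * MA ↔
      ∃ z : ℂ, ‖z‖ = 1 ∧ MA = Matrix.diagonal ![z, z, (z ^ 2)⁻¹] := by
  -- basic entry facts
  have h11 : MA 1 1 = A 0 0 := hMAblock 0 0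
  have h12 : MA 1 2 = A 0 1 := hMAblock 0 1
  have h21 : MA 2 1 = A 1 0 := hMAblock 1 0
  have h22 : MA 2 2 = A 1 1 := hMAblock 1 1
  have h01 : MA 0 1 = 0 := hMArow 0
  have h02 : MA 0 2 = 0 := hMArow 1
  have h10 : MA 1 0 = 0 := hMAcol 0
  have h20 : MA 2 0 = 0 := hMAcol 1
  -- |det A| = 1 and det A ≠ 0
  have hdet : (starRingEnd ℂ) A.det * A.det = 1 := by
    have := hA.1
    have hd := congrArg Matrix.det this
    simpa [Matrix.det_conjTranspose, Matrix.star_eq_conjTranspose] using hd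
  have hnorm : ‖A.det‖ = 1 := by
    have h2 : ‖A.det‖ ^ 2 = 1 := by
      have := congrArg norm hdet
      simpa [norm_mul, sq] using this
    nlinarith [norm_nonneg A.det]
  have hd0 : A.det ≠ 0 := by
    intro h; rw [h] at hnorm; simp at hnorm
  constructor
  · intro h
    have e01 := congrFun (congrFun h 0) 1
    have e02 := congrFun (congrFun h 0) 2
    have e20 := congrFun (congrFun h 2) 0
    simp [hX₀, Matrix.mul_apply, Fin.sum_univ_three, Matrix.vecHead, Matrix.vecTail] at e01 e02 e20
    -- e01 : -MA 0 0 = -MA 1 1, e02 : 0 = -MA 1 2, e20 : MA 2 1 = 0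
    refine ⟨(A.det)⁻¹, by simp [hnorm], ?_⟩
    have hA00 : A 0 0 = (A.det)⁻¹ := by
      rw [← h11]
      rw [← e01, hMA00]
    have hA01 : A 0 1 = 0 := by rw [← h12]; exact e02
    have hA10 : A 1 0 = 0 := by rw [← h21]; exact e20
    have hA11 : A 1 1 = A.det ^ 2 := by
      have hd : A.det = A 0 0 * A 1 1 - A 0 1 * A 1 0 := Matrix.det_fin_two A
      rw [hA00, hA01] at hd
      field_simp at hd
      simpa using hd.symm
    ext i j
    fin_cases i <;> fin_cases j <;>
      simp_all [Matrix.diagonal, inv_pow]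
  · intro ⟨z, hz, hMA⟩
    subst hMA hX₀
    ext i j
    fin_cases i <;> fin_cases j <;>
      simp [Matrix.mul_apply, Fin.sum_univ_three, Matrix.diagonal, Matrix.vecHead, Matrix.vecTail]
end
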